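/- Let n_1,…,n_k ≥ 1, n = n_1 + ⋯ + n_k ≥ 2, and suppose g = gcd(n_1,…,n_k) > 1. Let α be the canonical configuration and P_g the port assignment of Lemma 5. Then for every x : Fin n → ℕ → Bool compatible with α, every t ∈ ℕ and every i ∈ Fin n, there exists l ≠ i with K^{P_g,x} l t = K^{P_g,x} i t; consequently, no family of knowledge values arising from an x compatible with α ever solves leader election, i.e. with X i = R (α i) and R distributed according to μ, μ({R : ∃ i, ∀ l ≠ i, K^{P_g,X} l t ≠ K^{P_g,X} i t}) = 0 for every t. (This is the paper's Corollary 6: if the gcd exceeds 1, there is a port numbering making leader election impossible.) -/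
import Mathlib


open MeasureTheory Filter
open scoped ENNReal

/-- Message-passing knowledge values at time `t` (for `m = n - 1` ports): `init` at time `0`;
at time `t+1` a knowledge value is the previous knowledge, the fresh random bit, and the
vector of the previous knowledge values received on the `m` ports. (This is the time-indexed
form of the inductive type `W` with constructors `init : W` and
`step : W → Bool → (Fin (n-1) → W) → W`.) -/
def MPW (m : ℕ) : ℕ → Type
  | 0 => PUnit
  | t + 1 => MPW m t × Bool × (Fin m → MPW m t)

/-- The message-passing knowledge `K^{P,x} i t` of node `i` at time `t`, given the port
assignment `P` and the bit sequences `x`: `K^{P,x} i 0 = init` and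
`K^{P,x} i (t+1) = step (K^{P,x} i t) (x i t) (fun j => K^{P,x} (P i j) t)`. -/
def mpK {n : ℕ} (P : Fin n → Fin (n - 1) → Fin n) (x : Fin n → ℕ → Bool) :
    Fin n → (t : ℕ) → MPW (n - 1) t
  | _, 0 => PUnit.unit
  | i, t + 1 => (mpK P x i t, x i t, fun j => mpK P x (P i j) t)

/-- `α : Fin n → Fin k` is the canonical configuration for fiber sizes `nn` if it sends `i`
to the unique `c` with `nn 0 + ⋯ + nn (c-1) ≤ i < nn 0 + ⋯ + nn c`. -/
def IsCanonical {n k : ℕ} (nn : Fin k → ℕ) (α : Fin n → Fin k) : Prop :=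
  ∀ i : Fin n,
    (∑ c ∈ Finset.univ.filter (fun c => c < α i), nn c) ≤ (i : ℕ) ∧
    (i : ℕ) < ∑ c ∈ Finset.univ.filter (fun c => c ≤ α i), nn c

theorem shift_lt {n g i : ℕ} (hg : 0 < g) (hgn : g ∣ n) (hi : i < n) :
    g * (i / g) + ((i % g + 1) % g) < n := by
  have h1 : (i % g + 1) % g < g := Nat.mod_lt _ hg
  have h2 : i / g < n / g := Nat.div_lt_div_of_lt_of_dvd hgn hi
  calc g * (i / g) + ((i % g + 1) % g)
      < g * (i / g) + g := by omega
    _ = g * (i / g + 1) := (Nat.mul_succ g _).symm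
    _ ≤ g * (n / g) := Nat.mul_le_mul_left _ h2
    _ = n := Nat.mul_div_cancel' hgn

/-- The shift permutation `f` of Lemma 5: `f i = g⌊i/g⌋ + ((i mod g + 1) mod g)`. -/
def shiftF (n g : ℕ) (hg : 0 < g) (hgn : g ∣ n) : Fin n → Fin n :=
  fun i => ⟨g * ((i : ℕ) / g) + (((i : ℕ) % g + 1) % g), shift_lt hg hgn i.isLt⟩

/-- The port assignment `P_g` of Lemma 5: node `i`'s port `j ∈ {1,…,n-1}` (represented by
`j : Fin (n-1)`, standing for the port number `(j : ℕ) + 1`) is connected to node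
`((i + j) mod g + g⌊i/g⌋ + g⌊j/g⌋) mod n`. -/
def portG (n g : ℕ) (hn : 0 < n) : Fin n → Fin (n - 1) → Fin n :=
  fun i j =>
    ⟨(((i : ℕ) + ((j : ℕ) + 1)) % g + g * ((i : ℕ) / g) + g * (((j : ℕ) + 1) / g)) % n,
      Nat.mod_lt _ hn⟩

theorem dvd_of_dvd_fibers {k n g : ℕ} (nn : Fin k → ℕ) (hsum : n = ∑ c, nn c)
    (hgdvd : ∀ c, g ∣ nn c) : g ∣ n :=
  hsum ▸ Finset.dvd_sum fun c _ => hgdvd c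


lemma aux_mod_add (g n M r : ℕ) (hg : 0 < g) (hgn : g ∣ n) (hgM : g ∣ M) (hr : r < g)
    (hn : 0 < n) : (r + M) % n = r + M % n := by
  have h1 : M % n < n := Nat.mod_lt _ hn
  have h2 : g ∣ M % n := (Nat.dvd_mod_iff hgn).mpr hgM
  have h3 : g ∣ n - M % n := Nat.dvd_sub hgn h2
  have h4 : g ≤ n - M % n := Nat.le_of_dvd (by omega) h3
  have h5 : r + M % n < n := by omega
  have h6 : r % n = r := Nat.mod_eq_of_lt (by omega)
  rw [Nat.add_mod, h6]
  exact Nat.mod_eq_of_lt h5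

lemma portG_shiftF (n g : ℕ) (hn : 0 < n) (hg : 0 < g) (hgn : g ∣ n)
    (i : Fin n) (j : Fin (n - 1)) :
    portG n g hn (shiftF n g hg hgn i) j = shiftF n g hg hgn (portG n g hn i j) := by
  apply Fin.ext
  simp only [portG, shiftF]
  set a := (i : ℕ) with ha
  set b := (j : ℕ) + 1 with hb
  have hr : (a % g + 1) % g < g := Nat.mod_lt _ hg
  have hfa_div : (g * (a / g) + (a % g + 1) % g) / g = a / g := by
    rw [Nat.mul_add_div hg, Nat.div_eq_of_lt hr, Nat.add_zero]
  have hfa_mod : (g * (a / g) + (a % g + 1) % g) % g = (a + 1) % g := by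
    rw [Nat.mul_add_mod, Nat.mod_mod_of_dvd _ dvd_rfl]
    exact (Nat.mod_modEq a g).add_right 1
  have key1 : (g * (a / g) + (a % g + 1) % g + b) % g = (a + 1 + b) % g := by
    rw [Nat.add_mod, hfa_mod, ← Nat.add_mod]
  set M : ℕ := g * (a / g) + g * (b / g) with hM
  have hgM : g ∣ M := by exact Dvd.dvd.add (Dvd.intro _ rfl) (Dvd.intro _ rfl)
  set q : ℕ := (a + b) % g with hq
  have hqg : q < g := Nat.mod_lt _ hg
  -- RHS inner value
  have hinner : ((a + b) % g + g * (a / g) + g * (b / g)) % n = q + M % n := by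
    rw [Nat.add_assoc]
    exact aux_mod_add g n M q hg hgn hgM hqg hn
  rw [hinner]
  have hMn : g ∣ M % n := (Nat.dvd_mod_iff hgn).mpr hgM
  obtain ⟨s, hs⟩ := hMn
  have hdiv : (q + M % n) / g = s := by
    rw [hs, Nat.add_mul_div_left _ _ hg, Nat.div_eq_of_lt hqg, Nat.zero_add]
  have hmod : (q + M % n) % g = q := by
    rw [hs, Nat.add_mul_mod_self_left, Nat.mod_eq_of_lt hqg]
  rw [hdiv, hmod, ← hs]
  -- LHS
  rw [key1, hfa_div]
  have hq1 : (q + 1) % g < g := Nat.mod_lt _ hg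
  have hab1 : (a + 1 + b) % g = (q + 1) % g := by
    have h7 := (Nat.mod_modEq (a + b) g).add_right 1
    calc (a + 1 + b) % g = (a + b + 1) % g := by ring_nf
      _ = (q + 1) % g := h7.symm
  rw [hab1, Nat.add_assoc]
  rw [aux_mod_add g n M ((q+1)%g) hg hgn hgM hq1 hn]
  omega

lemma shiftF_ne (n g : ℕ) (hg1 : 1 < g) (hgn : g ∣ n) (i : Fin n) :
    shiftF n g (by omega) hgn i ≠ i := by
  intro h
  have h2 := congrArg Fin.val h
  simp only [shiftF] at h2
  have h3 : (i : ℕ) = g * ((i:ℕ) / g) + (i:ℕ) % g := (Nat.div_add_mod (i:ℕ) g).symm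
  have hr : (i:ℕ) % g < g := Nat.mod_lt _ (by omega)
  set r := (i:ℕ) % g with hrdef
  have : (r + 1) % g = r := by omega
  rcases Nat.lt_or_ge (r+1) g with h4 | h4
  · rw [Nat.mod_eq_of_lt h4] at this; omega
  · have h5 : r + 1 = g := by omega
    rw [h5, Nat.mod_self] at this; omega

lemma T_le_S {k : ℕ} (nn : Fin k → ℕ) {c c' : Fin k} (h : c < c') :
    (∑ d ∈ Finset.univ.filter (fun d => d ≤ c), nn d)
      ≤ ∑ d ∈ Finset.univ.filter (fun d => d < c'), nn d := by
  apply Finset.sum_le_sum_of_subset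
  intro d hd
  simp only [Finset.mem_filter, Finset.mem_univ, true_and] at *
  exact lt_of_le_of_lt hd h

lemma alpha_shiftF {n k g : ℕ} (hg : 0 < g) (hgn : g ∣ n) (nn : Fin k → ℕ)
    (hgdvd : ∀ c, g ∣ nn c) (α : Fin n → Fin k) (hα : IsCanonical nn α) (i : Fin n) :
    α (shiftF n g hg hgn i) = α i := by
  set f := shiftF n g hg hgn
  set a := (i : ℕ) with ha
  have hfval : (f i : ℕ) = g * (a / g) + (a % g + 1) % g := rfl
  have hS : ∀ c : Fin k, g ∣ ∑ d ∈ Finset.univ.filter (fun d => d < c), nn d :=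
    fun c => Finset.dvd_sum fun d _ => hgdvd d
  have hT : ∀ c : Fin k, g ∣ ∑ d ∈ Finset.univ.filter (fun d => d ≤ c), nn d :=
    fun c => Finset.dvd_sum fun d _ => hgdvd d
  obtain ⟨hSi, hTi⟩ := hα i
  obtain ⟨hSf, hTf⟩ := hα (f i)
  -- S (α i) ≤ g * (a / g)
  obtain ⟨s, hs⟩ := hS (α i)
  have h1 : g * s ≤ g * (a / g) := by
    apply Nat.mul_le_mul_left
    rw [Nat.le_div_iff_mul_le hg, mul_comm]
    exact hs ▸ hSi
  -- g * (a / g) + g ≤ T (α i)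
  obtain ⟨tt, ht⟩ := hT (α i)
  have h2 : g * (a / g) + g ≤ g * tt := by
    have : a / g < tt := by
      rw [Nat.div_lt_iff_lt_mul hg, mul_comm]
      exact ht ▸ hTi
    calc g * (a / g) + g = g * (a / g + 1) := by ring
      _ ≤ g * tt := Nat.mul_le_mul_left _ this
  have hr : (a % g + 1) % g < g := Nat.mod_lt _ hg
  have hSle : (∑ d ∈ Finset.univ.filter (fun d => d < α i), nn d) ≤ (f i : ℕ) :=
    calc (∑ d ∈ Finset.univ.filter (fun d => d < α i), nn d) = g * s := hs
      _ ≤ g * (a / g) := h1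
      _ ≤ (f i : ℕ) := by rw [hfval]; exact Nat.le_add_right _ _
  have hTgt : (f i : ℕ) < ∑ d ∈ Finset.univ.filter (fun d => d ≤ α i), nn d :=
    calc (f i : ℕ) = g * (a / g) + (a % g + 1) % g := hfval
      _ < g * (a / g) + g := by omega
      _ ≤ g * tt := h2
      _ = ∑ d ∈ Finset.univ.filter (fun d => d ≤ α i), nn d := ht.symm
  by_contra hne
  rcases Ne.lt_or_gt hne with hlt | hlt
  · exact absurd hTf (not_lt.mpr (le_trans (T_le_S nn hlt) hSle))
  · exact absurd hTgt (not_lt.mpr (le_trans (T_le_S nn hlt) hSf))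

lemma mpK_shiftF {n g : ℕ} (hn : 0 < n) (hg : 0 < g) (hgn : g ∣ n)
    (x : Fin n → ℕ → Bool)
    (hx : ∀ i : Fin n, x (shiftF n g hg hgn i) = x i) :
    ∀ (t : ℕ) (i : Fin n),
      mpK (portG n g hn) x (shiftF n g hg hgn i) t = mpK (portG n g hn) x i t := by
  intro t
  induction t with
  | zero => intro i; rfl
  | succ t IH =>
    intro i
    show (mpK (portG n g hn) x (shiftF n g hg hgn i) t,
          x (shiftF n g hg hgn i) t,
          fun j => mpK (portG n g hn) x (portG n g hn (shiftF n g hg hgn i) j) t)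
        = (mpK (portG n g hn) x i t, x i t,
          fun j => mpK (portG n g hn) x (portG n g hn i j) t)
    rw [IH i, hx i]
    congr 1
    congr 1
    funext j
    rw [portG_shiftF n g hn hg hgn i j]
    exact IH _

/-- **Corollary 6.** If `g = gcd (n_1, …, n_k) > 1`, then with the canonical configuration
`α` and the port assignment `P_g`: for every `x` compatible with `α`, every node's knowledge
coincides with that of some other node at every time; consequently, with `X i = R (α i)` and
`μ` the product of fair-coin measures, the probability that leader election is solved at time
`t` is `0` for every `t`. -/
theorem gcd_gt_one_leader_election_impossible (n k : ℕ) (hn : 2 ≤ n)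
    (nn : Fin k → ℕ) (hnn : ∀ c, 1 ≤ nn c) (hsum : n = ∑ c, nn c)
    (hg : 1 < Finset.univ.gcd nn)
    (α : Fin n → Fin k) (hα : IsCanonical nn α)
    (μ : Measure (Fin k → ℕ → Bool)) [IsProbabilityMeasure μ]
    (hμ : ∀ (t : ℕ) (y : Fin k → Fin t → Bool),
      μ {R | ∀ (c : Fin k) (s : Fin t), R c (s : ℕ) = y c s} = (2 : ℝ≥0∞)⁻¹ ^ (k * t)) :
    (∀ x : Fin n → ℕ → Bool, (∀ i j, α i = α j → x i = x j) →
      ∀ (t : ℕ) (i : Fin n), ∃ l : Fin n, l ≠ i ∧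
        mpK (portG n (Finset.univ.gcd nn) (by omega)) x l t =
          mpK (portG n (Finset.univ.gcd nn) (by omega)) x i t) ∧
    (∀ t : ℕ, μ {R | ∃ i : Fin n, ∀ l : Fin n, l ≠ i →
        mpK (portG n (Finset.univ.gcd nn) (by omega)) (fun i' => R (α i')) l t ≠
          mpK (portG n (Finset.univ.gcd nn) (by omega)) (fun i' => R (α i')) i t} = 0) := by
  set g := Finset.univ.gcd nn with hgdef
  have hg0 : 0 < g := by omega
  have hgdvd : ∀ c, g ∣ nn c := fun c => Finset.gcd_dvd (Finset.mem_univ c)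
  have hgn : g ∣ n := dvd_of_dvd_fibers nn hsum hgdvd
  have hn0 : 0 < n := by omega
  have part1 : ∀ x : Fin n → ℕ → Bool, (∀ i j, α i = α j → x i = x j) →
      ∀ (t : ℕ) (i : Fin n), ∃ l : Fin n, l ≠ i ∧
        mpK (portG n g (by omega)) x l t = mpK (portG n g (by omega)) x i t := by
    intro x hcompat t i
    refine ⟨shiftF n g hg0 hgn i, shiftF_ne n g hg hgn i, ?_⟩
    exact mpK_shiftF hn0 hg0 hgn x
      (fun i' => hcompat _ _ (alpha_shiftF hg0 hgn nn hgdvd α hα i')) t i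
  refine ⟨part1, fun t => ?_⟩
  have hempty : {R : Fin k → ℕ → Bool | ∃ i : Fin n, ∀ l : Fin n, l ≠ i →
      mpK (portG n g (by omega)) (fun i' => R (α i')) l t ≠
        mpK (portG n g (by omega)) (fun i' => R (α i')) i t} = ∅ := by
    ext R
    simp only [Set.mem_setOf_eq, Set.mem_empty_iff_false, iff_false]
    rintro ⟨i, hi⟩
    obtain ⟨l, hl, heq⟩ := part1 (fun i' => R (α i'))
      (fun i j h => congrArg R h) t i
    exact hi l hl heq
  rw [hempty]
  exact measure_empty
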